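/- Let m > n with Δ = m − n, let z_n be an even eigenfunction at level n with eigenvalue Λ and z_m an even eigenfunction at level m with the same eigenvalue Λ. Define the moments a_k = ∫_{−1}^{1} z_n(x)·x^{2k}/(2k)! dx and b_k = ∫_{−1}^{1} z_m(x)·x^{2k}/(2k)! dx, and the stone coefficients c_j = (−1)^j (L^{2n−2j−2}(Λ)z_n)(0) for 0 ≤ j ≤ n−p−1 and d_j = (−1)^j (L^{2m−2j−2}(Λ)z_m)(0) for 0 ≤ j ≤ m−p−1. For sequences f, g and an integer k set (f,g)_k = (−1)^k Σ_{i=0}^{k} f_i g_{k−i} for k ≥ 0 and (f,g)_k = 0 for k < 0. Then for every integer k with −1−⌊Δ/2⌋ ≤ k ≤ n−p−1: (b,c)_k = (a,d)_{k+Δ}. -/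

import Mathlib

noncomputable section

/-- `Omega k z`: `z` is infinitely differentiable on `ℝ` and
`z⁽ʲ⁾(−1) = z⁽ʲ⁾(1) = 0` for `j = 0, …, k−1`. -/
def Omega (k : ℕ) (z : ℝ → ℝ) : Prop :=
  ContDiff ℝ (⊤ : ℕ∞) z ∧ ∀ j < k, iteratedDeriv j z (-1) = 0 ∧ iteratedDeriv j z 1 = 0

/-- `z` is not identically zero on `[−1,1]`. -/
def NotIdZero (z : ℝ → ℝ) : Prop := ∃ x ∈ Set.Icc (-1:ℝ) 1, z x ≠ 0

/-- The operator `L^{2k}(Λ) z = (−1)^k z^{(2k)} − Λ (−1)^{k−p} z^{(2k−2p)}`. -/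
def Lop (p k : ℕ) (Λ : ℝ) (z : ℝ → ℝ) : ℝ → ℝ := fun x =>
  (-1 : ℝ) ^ k * iteratedDeriv (2 * k) z x
    - Λ * (-1 : ℝ) ^ (k - p) * iteratedDeriv (2 * k - 2 * p) z x

/-- `z` is an even eigenfunction at level `k` with eigenvalue `Λ`. -/
def EvenEig (p k : ℕ) (Λ : ℝ) (z : ℝ → ℝ) : Prop :=
  Omega k z ∧ NotIdZero z ∧ (∀ x, z (-x) = z x) ∧
    ∀ x ∈ Set.Icc (-1:ℝ) 1, Lop p k Λ z x = 0


/-- `(f,g)_k = (−1)^k Σ_{i=0}^{k} f_i g_{k−i}` for `k ≥ 0`, and `0` for `k < 0`. -/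
def pairC (f g : ℕ → ℝ) (k : ℤ) : ℝ :=
  if k < 0 then 0
  else (-1 : ℝ) ^ k.toNat * ∑ i ∈ Finset.range (k.toNat + 1), f i * g (k.toNat - i)

open intervalIntegral MeasureTheory Set
open scoped ContDiff Nat

namespace S18

variable {f g : ℝ → ℝ}

lemma one_le_inf : (1 : WithTop ℕ∞) ≤ ∞ := by exact_mod_cast (le_top : (1:ℕ∞) ≤ ⊤)

lemma smooth_iter (hf : ContDiff ℝ ∞ f) (k : ℕ) : ContDiff ℝ ∞ (iteratedDeriv k f) := by
  rw [iteratedDeriv_eq_iterate]; exact hf.iterate_deriv k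

lemma iter_iter (f : ℝ → ℝ) (a b : ℕ) :
    iteratedDeriv a (iteratedDeriv b f) = iteratedDeriv (b + a) f := by
  induction a with
  | zero => simp
  | succ a ih =>
    rw [iteratedDeriv_succ, ih, ← iteratedDeriv_succ, Nat.add_assoc]

lemma iter_linear (hf : ContDiff ℝ ∞ f) (hg : ContDiff ℝ ∞ g) (μ : ℝ) (k : ℕ) :
    iteratedDeriv k (fun x => f x - μ * g x)
      = fun x => iteratedDeriv k f x - μ * iteratedDeriv k g x := by
  induction k with
  | zero => simp
  | succ k ih =>
    rw [iteratedDeriv_succ, ih, iteratedDeriv_succ, iteratedDeriv_succ]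
    funext x
    have h1 : DifferentiableAt ℝ (iteratedDeriv k f) x :=
      ((smooth_iter hf k).differentiable (by simp)).differentiableAt
    have h2 : DifferentiableAt ℝ (iteratedDeriv k g) x :=
      ((smooth_iter hg k).differentiable (by simp)).differentiableAt
    rw [deriv_fun_sub h1 (h2.const_mul μ), deriv_const_mul μ h2]

lemma even_iter (hf : ∀ x, f (-x) = f x) (k : ℕ) (x : ℝ) :
    iteratedDeriv (2*k) f (-x) = iteratedDeriv (2*k) f x := by
  have h := iteratedDeriv_comp_neg (2*k) f x
  rw [funext hf] at h
  have h2 : ((-1:ℝ) ^ (2*k)) = 1 := by rw [pow_mul]; norm_num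
  rw [h2, one_smul] at h
  exact h.symm

lemma odd_coeff (hf : ∀ x, f (-x) = f x) {t : ℕ} (ht : Odd t) : iteratedDeriv t f 0 = 0 := by
  have h := iteratedDeriv_comp_neg t f 0
  rw [funext hf, neg_zero, ht.neg_one_pow, smul_eq_mul] at h
  linarith

lemma neg_one_pow_congr {a b : ℕ} (h : a % 2 = b % 2) : (-1:ℝ)^a = (-1)^b := by
  rcases Nat.even_or_odd a with ha | ha
  · have hb : Even b := by rcases ha with ⟨r, hr⟩; exact (Nat.even_iff).2 (by omega)
    rw [ha.neg_one_pow, hb.neg_one_pow]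
  · have hb : Odd b := by rcases ha with ⟨r, hr⟩; exact (Nat.odd_iff).2 (by omega)
    rw [ha.neg_one_pow, hb.neg_one_pow]

lemma sum_range_two_mul (M : ℕ) (F : ℕ → ℝ) :
    ∑ t ∈ Finset.range (2*M), F t = ∑ t ∈ Finset.range M, (F (2*t) + F (2*t+1)) := by
  induction M with
  | zero => simp
  | succ M ih =>
    have h : 2*(M+1) = (2*M) + 1 + 1 := by ring
    rw [h, Finset.sum_range_succ, Finset.sum_range_succ, ih, Finset.sum_range_succ]
    ring


lemma one_le_inf' : (1 : WithTop ℕ∞) ≤ ∞ := by exact_mod_cast (le_top : (1:ℕ∞) ≤ ⊤)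

lemma taylor_zero : ∀ (N : ℕ) (h : ℝ → ℝ), ContDiff ℝ ∞ h →
    (∀ x ∈ Ioo (-1:ℝ) 1, iteratedDeriv N h x = 0) →
    ∀ x ∈ Ioo (-1:ℝ) 1, h x = ∑ t ∈ Finset.range N, (iteratedDeriv t h 0 / (t)!) * x^t := by
  intro N
  induction N with
  | zero =>
    intro h _ hz x hx
    simpa using hz x hx
  | succ N ih =>
    intro h hh hz x hx
    have hD : ContDiff ℝ ∞ (deriv h) := (contDiff_infty_iff_deriv.mp hh).2
    have hz' : ∀ y ∈ Ioo (-1:ℝ) 1, iteratedDeriv N (deriv h) y = 0 := by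
      intro y hy
      rw [← iteratedDeriv_succ']
      exact hz y hy
    have key := ih (deriv h) hD hz'
    have hsub : uIcc (0:ℝ) x ⊆ Ioo (-1:ℝ) 1 := by
      intro y hy
      rcases Set.mem_uIcc.mp hy with ⟨h1, h2⟩ | ⟨h1, h2⟩ <;>
        exact ⟨by nlinarith [hx.1, hx.2], by nlinarith [hx.1, hx.2]⟩
    have hft : ∫ t in (0:ℝ)..x, deriv h t = h x - h 0 := by
      apply integral_deriv_eq_sub
      · exact fun y _ => ((hh.differentiable (by simp)).differentiableAt)
      · exact hD.continuous.intervalIntegrable _ _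
    have hcong : ∫ t in (0:ℝ)..x, deriv h t
        = ∫ t in (0:ℝ)..x, ∑ s ∈ Finset.range N, (iteratedDeriv s (deriv h) 0 / (s)!) * t^s := by
      apply integral_congr
      intro y hy
      exact key y (hsub hy)
    have hsum : ∫ t in (0:ℝ)..x, ∑ s ∈ Finset.range N, (iteratedDeriv s (deriv h) 0 / (s)!) * t^s
        = ∑ s ∈ Finset.range N, (iteratedDeriv s (deriv h) 0 / (s)!) * (x^(s+1)/(s+1)) := by
      rw [intervalIntegral.integral_finset_sum]
      · refine Finset.sum_congr rfl fun s _ => ?_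
        rw [intervalIntegral.integral_const_mul, integral_pow]
        norm_num
      · intro s _
        exact ((continuous_const.mul (continuous_pow s)).intervalIntegrable _ _)
    have hx0 : h x = h 0 + ∑ s ∈ Finset.range N,
        (iteratedDeriv (s+1) h 0 / ((s+1))!) * x^(s+1) := by
      have : h x = h 0 + ∑ s ∈ Finset.range N,
          (iteratedDeriv s (deriv h) 0 / (s)!) * (x^(s+1)/(s+1)) := by
        rw [← hsum, ← hcong, hft]; ring
      rw [this]
      congr 1
      refine Finset.sum_congr rfl fun s _ => ?_
      rw [← iteratedDeriv_succ', Nat.factorial_succ]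
      push_cast
      rw [div_mul_div_comm, div_mul_eq_mul_div]
      congr 1
      ring
    rw [Finset.sum_range_succ']
    simp only [pow_zero, mul_one, iteratedDeriv_zero, Nat.factorial_zero]
    rw [hx0]
    push_cast
    ring

lemma taylor_zero_Icc (N : ℕ) (h : ℝ → ℝ) (hh : ContDiff ℝ ∞ h)
    (hz : ∀ x ∈ Ioo (-1:ℝ) 1, iteratedDeriv N h x = 0) :
    ∀ x ∈ Icc (-1:ℝ) 1, h x = ∑ t ∈ Finset.range N, (iteratedDeriv t h 0 / (t)!) * x^t := by
  have heq : Set.EqOn h (fun x => ∑ t ∈ Finset.range N, (iteratedDeriv t h 0 / (t)!) * x^t)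
      (Ioo (-1:ℝ) 1) := fun x hx => taylor_zero N h hh hz x hx
  have hcl := heq.closure hh.continuous
    (continuous_finset_sum _ fun t _ => continuous_const.mul (continuous_pow t))
  rw [closure_Ioo (by norm_num : (-1:ℝ) ≠ 1)] at hcl
  exact fun x hx => hcl hx

lemma rep (ph w : ℝ → ℝ) (hph : Continuous ph) (hw : ContDiff ℝ ∞ w) (hwe : ∀ x, w (-x) = w x)
    (K r : ℕ) (hzero : ∀ x ∈ Ioo (-1:ℝ) 1, iteratedDeriv (2*(r+K+1)) w x = 0) :
    ∫ x in (-1:ℝ)..1, ph x * iteratedDeriv (2*r) w x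
      = ∑ t ∈ Finset.range (K+1), iteratedDeriv (2*(r+t)) w 0 *
          ∫ x in (-1:ℝ)..1, ph x * x^(2*t) / (2*t)! := by
  set h : ℝ → ℝ := iteratedDeriv (2*r) w with hh_def
  have hh : ContDiff ℝ ∞ h := smooth_iter hw _
  have hhe : ∀ x, h (-x) = h x := even_iter hwe r
  have hz : ∀ x ∈ Ioo (-1:ℝ) 1, iteratedDeriv (2*(K+1)) h x = 0 := by
    intro x hx
    rw [hh_def, iter_iter, show 2*r + 2*(K+1) = 2*(r+K+1) by ring]
    exact hzero x hx
  have htay := taylor_zero_Icc (2*(K+1)) h hh hz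
  have htay2 : ∀ x ∈ Icc (-1:ℝ) 1,
      h x = ∑ t ∈ Finset.range (K+1), (iteratedDeriv (2*t) h 0 / (2*t)!) * x^(2*t) := by
    intro x hx
    rw [htay x hx, sum_range_two_mul]
    refine Finset.sum_congr rfl fun t _ => ?_
    rw [odd_coeff hhe (t := 2*t+1) ⟨t, by ring⟩]
    simp
  have hcongr : ∫ x in (-1:ℝ)..1, ph x * h x
      = ∫ x in (-1:ℝ)..1, ∑ t ∈ Finset.range (K+1),
          iteratedDeriv (2*t) h 0 * (ph x * x^(2*t) / (2*t)!) := by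
    apply integral_congr
    intro x hx
    rw [Set.uIcc_of_le (by norm_num : (-1:ℝ) ≤ 1)] at hx
    show ph x * h x = ∑ t ∈ Finset.range (K+1),
      iteratedDeriv (2*t) h 0 * (ph x * x^(2*t) / (2*t)!)
    rw [htay2 x hx, Finset.mul_sum]
    exact Finset.sum_congr rfl fun t _ => by ring
  rw [hcongr, intervalIntegral.integral_finset_sum]
  · refine Finset.sum_congr rfl fun t _ => ?_
    rw [intervalIntegral.integral_const_mul]
    congr 1
    rw [hh_def, iter_iter, show 2*r + 2*t = 2*(r+t) by ring]
  · intro t _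
    exact (continuous_const.mul ((hph.mul (continuous_pow (2*t))).div_const _)).intervalIntegrable _ _

lemma ibp (hf : ContDiff ℝ ∞ f) (hg : ContDiff ℝ ∞ g) :
    ∫ x in (-1:ℝ)..1, f x * deriv g x
      = f 1 * g 1 - f (-1) * g (-1) - ∫ x in (-1:ℝ)..1, deriv f x * g x := by
  apply intervalIntegral.integral_mul_deriv_eq_deriv_mul
  · exact fun x _ => (hf.differentiable (by simp)).differentiableAt.hasDerivAt
  · exact fun x _ => (hg.differentiable (by simp)).differentiableAt.hasDerivAt
  · exact ((contDiff_infty_iff_deriv.mp hf).2.continuous).intervalIntegrable _ _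
  · exact ((contDiff_infty_iff_deriv.mp hg).2.continuous).intervalIntegrable _ _

lemma ibp2 (hf : ContDiff ℝ ∞ f) (hg : ContDiff ℝ ∞ g)
    (h1 : f 1 * deriv g 1 = 0) (h2 : f (-1) * deriv g (-1) = 0)
    (h3 : deriv f 1 * g 1 = 0) (h4 : deriv f (-1) * g (-1) = 0) :
    ∫ x in (-1:ℝ)..1, iteratedDeriv 2 f x * g x
      = ∫ x in (-1:ℝ)..1, f x * iteratedDeriv 2 g x := by
  have hf' : ContDiff ℝ ∞ (deriv f) := (contDiff_infty_iff_deriv.mp hf).2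
  have hg' : ContDiff ℝ ∞ (deriv g) := (contDiff_infty_iff_deriv.mp hg).2
  have e2 : ∀ u : ℝ → ℝ, iteratedDeriv 2 u = deriv (deriv u) := by
    intro u
    rw [show (2:ℕ) = 1 + 1 from rfl, iteratedDeriv_succ, iteratedDeriv_one]
  have A := ibp hf hg'
  have B := ibp hg hf'
  have eA : (fun x => f x * iteratedDeriv 2 g x) = fun x => f x * deriv (deriv g) x := by
    funext x; rw [e2]
  have eB : (fun x => iteratedDeriv 2 f x * g x) = fun x => g x * deriv (deriv f) x := by
    funext x; rw [e2]; ring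
  have eC : (∫ x in (-1:ℝ)..1, deriv g x * f x) = ∫ x in (-1:ℝ)..1, deriv f x * deriv g x → True := fun _ => trivial
  calc ∫ x in (-1:ℝ)..1, iteratedDeriv 2 f x * g x
      = ∫ x in (-1:ℝ)..1, g x * deriv (deriv f) x := by rw [eB]
    _ = g 1 * deriv f 1 - g (-1) * deriv f (-1) - ∫ x in (-1:ℝ)..1, deriv g x * deriv f x := B
    _ = - ∫ x in (-1:ℝ)..1, deriv g x * deriv f x := by
        rw [mul_comm (g 1) _, mul_comm (g (-1)) _, h3, h4]; ring
    _ = - ∫ x in (-1:ℝ)..1, deriv f x * deriv g x := by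
        congr 1; apply integral_congr; exact fun x _ => mul_comm _ _
    _ = f 1 * deriv g 1 - f (-1) * deriv g (-1) - ∫ x in (-1:ℝ)..1, deriv f x * deriv g x := by
        rw [h1, h2]; ring
    _ = ∫ x in (-1:ℝ)..1, f x * deriv (deriv g) x := by
        rw [← A]
    _ = ∫ x in (-1:ℝ)..1, f x * iteratedDeriv 2 g x := by rw [← eA]

lemma ode_of_eig {p ℓ : ℕ} {Λ : ℝ} {z : ℝ → ℝ} (hpl : p ≤ ℓ)
    (hL : ∀ x ∈ Icc (-1:ℝ) 1, Lop p ℓ Λ z x = 0) :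
    ∀ x ∈ Icc (-1:ℝ) 1,
      iteratedDeriv (2*ℓ) z x = (Λ * (-1:ℝ)^p) * iteratedDeriv (2*(ℓ-p)) z x := by
  intro x hx
  have h := hL x hx
  unfold Lop at h
  rw [show 2*ℓ - 2*p = 2*(ℓ-p) by omega] at h
  have hsq : (-1:ℝ)^ℓ * (-1:ℝ)^ℓ = 1 := by
    rw [← pow_add, show ℓ + ℓ = 2*ℓ by ring, pow_mul]; norm_num
  have hpow : (-1:ℝ)^ℓ * (-1:ℝ)^(ℓ-p) = (-1:ℝ)^p := by
    rw [← pow_add, show ℓ + (ℓ-p) = 2*(ℓ-p) + p by omega, pow_add, pow_mul]; norm_num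
  have h2 : (-1:ℝ)^ℓ * iteratedDeriv (2*ℓ) z x
      = Λ * (-1:ℝ)^(ℓ-p) * iteratedDeriv (2*(ℓ-p)) z x := by linarith
  calc iteratedDeriv (2*ℓ) z x
      = ((-1:ℝ)^ℓ * (-1:ℝ)^ℓ) * iteratedDeriv (2*ℓ) z x := by rw [hsq, one_mul]
    _ = (-1:ℝ)^ℓ * ((-1:ℝ)^ℓ * iteratedDeriv (2*ℓ) z x) := by ring
    _ = (-1:ℝ)^ℓ * (Λ * (-1:ℝ)^(ℓ-p) * iteratedDeriv (2*(ℓ-p)) z x) := by rw [h2]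
    _ = (Λ * (-1:ℝ)^p) * iteratedDeriv (2*(ℓ-p)) z x := by
        rw [show (-1:ℝ)^ℓ * (Λ * (-1:ℝ)^(ℓ-p) * iteratedDeriv (2*(ℓ-p)) z x)
            = Λ * ((-1:ℝ)^ℓ * (-1:ℝ)^(ℓ-p)) * iteratedDeriv (2*(ℓ-p)) z x by ring, hpow]

lemma stone_val {p ℓ : ℕ} {Λ : ℝ} {z : ℝ → ℝ} (hsz : ContDiff ℝ ∞ z)
    (hp : 1 ≤ p) (hpl : p < ℓ) (j : ℕ) (hj : j ≤ ℓ - p - 1) :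
    (-1:ℝ)^j * Lop p (ℓ - j - 1) Λ z 0
      = (-1:ℝ)^(ℓ-1) * (iteratedDeriv (2*(ℓ-p-1-j))
          (fun x => iteratedDeriv (2*p) z x - (Λ*(-1:ℝ)^p) * z x) 0) := by
  have hW : iteratedDeriv (2*(ℓ-p-1-j))
      (fun x => iteratedDeriv (2*p) z x - (Λ*(-1:ℝ)^p) * z x) 0
      = iteratedDeriv (2*(ℓ-j-1)) z 0
        - (Λ*(-1:ℝ)^p) * iteratedDeriv (2*(ℓ-p-1-j)) z 0 := by
    have h1 := congrFun (iter_linear (smooth_iter hsz (2*p)) hsz (Λ*(-1:ℝ)^p)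
      (2*(ℓ-p-1-j))) 0
    rw [show (2*(ℓ-j-1)) = 2*p + 2*(ℓ-p-1-j) by omega, ← iter_iter]
    exact h1
  rw [hW]
  unfold Lop
  rw [show 2*(ℓ-j-1) - 2*p = 2*(ℓ-p-1-j) by omega]
  have s1 : (-1:ℝ)^j * (-1:ℝ)^(ℓ-j-1) = (-1:ℝ)^(ℓ-1) := by
    rw [← pow_add]; congr 1; omega
  have s2 : (-1:ℝ)^j * (-1:ℝ)^(ℓ-j-1-p) = (-1:ℝ)^(ℓ-1) * (-1:ℝ)^p := by
    rw [← pow_add, ← pow_add]; exact neg_one_pow_congr (by omega)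
  linear_combination iteratedDeriv (2*(ℓ-j-1)) z 0 * s1
    - Λ * iteratedDeriv (2*(ℓ-p-1-j)) z 0 * s2

end S18


open S18

theorem stmt18 (p : ℕ) (hp : 1 ≤ p) (n : ℕ) (hn : p < n) (m : ℕ) (hm : n < m)
    (Λ : ℝ) (zn zm : ℝ → ℝ)
    (hzn : EvenEig p n Λ zn) (hzm : EvenEig p m Λ zm)
    (a b c d : ℕ → ℝ)
    (ha : ∀ k, a k = ∫ x in (-1:ℝ)..1, zn x * x ^ (2 * k) / (Nat.factorial (2 * k)))
    (hb : ∀ k, b k = ∫ x in (-1:ℝ)..1, zm x * x ^ (2 * k) / (Nat.factorial (2 * k)))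
    (hc : ∀ j ≤ n - p - 1, c j = (-1 : ℝ) ^ j * Lop p (n - j - 1) Λ zn 0)
    (hd : ∀ j ≤ m - p - 1, d j = (-1 : ℝ) ^ j * Lop p (m - j - 1) Λ zm 0)
    (k : ℤ) (hk1 : -1 - ((m : ℤ) - n) / 2 ≤ k) (hk2 : k ≤ (n : ℤ) - p - 1) :
    pairC b c k = pairC a d (k + ((m : ℤ) - n)) := by
  obtain ⟨⟨hzns, hznb⟩, -, hzne, hznL⟩ := hzn
  obtain ⟨⟨hzms, hzmb⟩, -, hzme, hzmL⟩ := hzm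
  have hsn : ContDiff ℝ ∞ zn := hzns.of_le (by simp)
  have hsm : ContDiff ℝ ∞ zm := hzms.of_le (by simp)
  set μ : ℝ := Λ * (-1:ℝ)^p with hμdef
  set Wn : ℝ → ℝ := fun x => iteratedDeriv (2*p) zn x - μ * zn x with hWndef
  set Wm : ℝ → ℝ := fun x => iteratedDeriv (2*p) zm x - μ * zm x with hWmdef
  have hsmi : ∀ k, ContDiff ℝ ∞ (iteratedDeriv k zn) := smooth_iter hsn
  have hsmj : ∀ k, ContDiff ℝ ∞ (iteratedDeriv k zm) := smooth_iter hsm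
  have hWnsm : ContDiff ℝ ∞ Wn := (hsmi (2*p)).sub (contDiff_const.mul hsn)
  have hWmsm : ContDiff ℝ ∞ Wm := (hsmj (2*p)).sub (contDiff_const.mul hsm)
  have hWne : ∀ x, Wn (-x) = Wn x := by
    intro x; rw [hWndef]; simp only
    rw [even_iter hzne p x, hzne x]
  have hWme : ∀ x, Wm (-x) = Wm x := by
    intro x; rw [hWmdef]; simp only
    rw [even_iter hzme p x, hzme x]
  have En := ode_of_eig (le_of_lt hn) hznL
  have Em := ode_of_eig (le_of_lt (hn.trans hm)) hzmL
  rw [← hμdef] at En Em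
  -- linearity of iterated derivatives of Wn, Wm
  have hWnlin : ∀ (r : ℕ) (x : ℝ), iteratedDeriv (2*r) Wn x
      = iteratedDeriv (2*(r+p)) zn x - μ * iteratedDeriv (2*r) zn x := by
    intro r x
    have h1 := congrFun (iter_linear (hsmi (2*p)) hsn μ (2*r)) x
    rw [hWndef]
    rw [show (2*(r+p)) = 2*p + 2*r by ring, ← iter_iter]
    exact h1
  have hWmlin : ∀ (r : ℕ) (x : ℝ), iteratedDeriv (2*r) Wm x
      = iteratedDeriv (2*(r+p)) zm x - μ * iteratedDeriv (2*r) zm x := by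
    intro r x
    have h1 := congrFun (iter_linear (hsmj (2*p)) hsm μ (2*r)) x
    rw [hWmdef]
    rw [show (2*(r+p)) = 2*p + 2*r by ring, ← iter_iter]
    exact h1
  have hWn_zero : ∀ x ∈ Ioo (-1:ℝ) 1, iteratedDeriv (2*(n-p)) Wn x = 0 := by
    intro x hx
    rw [hWnlin, show (n-p)+p = n by omega, En x (Set.Ioo_subset_Icc_self hx)]
    ring
  have hWm_zero : ∀ x ∈ Ioo (-1:ℝ) 1, iteratedDeriv (2*(m-p)) Wm x = 0 := by
    intro x hx
    rw [hWmlin, show (m-p)+p = m by omega, Em x (Set.Ioo_subset_Icc_self hx)]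
    ring
  -- transfer lemma
  have TL : ∀ i j : ℕ, 2*(i+j) ≤ m + n →
      (∫ x in (-1:ℝ)..1, iteratedDeriv (2*i) zn x * iteratedDeriv (2*j) zm x)
        = ∫ x in (-1:ℝ)..1, zn x * iteratedDeriv (2*(i+j)) zm x := by
    intro i
    induction i with
    | zero => intro j _; simp
    | succ i ih =>
      intro j hij
      have hd1 : deriv (iteratedDeriv (2*i) zn) = iteratedDeriv (2*i+1) zn :=
        (iteratedDeriv_succ).symm
      have hd2 : deriv (iteratedDeriv (2*j) zm) = iteratedDeriv (2*j+1) zm :=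
        (iteratedDeriv_succ).symm
      have hb1 : ∀ s : ℝ, s = 1 ∨ s = -1 →
          iteratedDeriv (2*i) zn s * iteratedDeriv (2*j+1) zm s = 0 := by
        intro s hs
        by_cases hcase : 2*i < n
        · have h0 := hznb _ hcase
          rcases hs with h | h <;> rw [h] <;> simp [h0.1, h0.2]
        · have h0 := hzmb (2*j+1) (by omega)
          rcases hs with h | h <;> rw [h] <;> simp [h0.1, h0.2]
      have hb2 : ∀ s : ℝ, s = 1 ∨ s = -1 →
          iteratedDeriv (2*i+1) zn s * iteratedDeriv (2*j) zm s = 0 := by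
        intro s hs
        by_cases hcase : 2*i+1 < n
        · have h0 := hznb _ hcase
          rcases hs with h | h <;> rw [h] <;> simp [h0.1, h0.2]
        · have h0 := hzmb (2*j) (by omega)
          rcases hs with h | h <;> rw [h] <;> simp [h0.1, h0.2]
      have h2 := ibp2 (f := iteratedDeriv (2*i) zn) (g := iteratedDeriv (2*j) zm)
        (hsmi _) (hsmj _)
        (by rw [hd2]; exact hb1 1 (Or.inl rfl))
        (by rw [hd2]; exact hb1 (-1) (Or.inr rfl))
        (by rw [hd1]; exact hb2 1 (Or.inl rfl))
        (by rw [hd1]; exact hb2 (-1) (Or.inr rfl))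
      rw [iter_iter, iter_iter] at h2
      rw [show 2*i + 2 = 2*(i+1) by ring, show 2*j + 2 = 2*(j+1) by ring] at h2
      rw [h2, ih (j+1) (by omega), show i + (j+1) = (i+1) + j by ring]
  -- flip lemma
  have flip : ∀ i : ℕ, 2*i ≤ m + n →
      (∫ x in (-1:ℝ)..1, zm x * iteratedDeriv (2*i) zn x)
        = ∫ x in (-1:ℝ)..1, zn x * iteratedDeriv (2*i) zm x := by
    intro i hi
    have t := TL i 0 (by omega)
    rw [Nat.add_zero] at t
    rw [← t]
    apply integral_congr
    intro x _
    simp [mul_comm]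
  -- reduction using the ODE for zn
  have Rle : ∀ r : ℕ, n - p ≤ r → 2*(r+p) ≤ m + n →
      (∫ x in (-1:ℝ)..1, zn x * iteratedDeriv (2*(r+p)) zm x)
        = μ * ∫ x in (-1:ℝ)..1, zn x * iteratedDeriv (2*r) zm x := by
    intro r hr1 hr2
    have t1 := TL n (r + p - n) (by omega)
    rw [show n + (r + p - n) = r + p by omega] at t1
    have t2 := TL (n-p) (r + p - n) (by omega)
    rw [show (n-p) + (r+p-n) = r by omega] at t2
    rw [← t1, ← t2, ← intervalIntegral.integral_const_mul]
    apply integral_congr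
    intro x hx
    rw [Set.uIcc_of_le (by norm_num : (-1:ℝ) ≤ 1)] at hx
    beta_reduce
    rw [En x hx]; ring
  -- splitting of integrals against W
  have hint : ∀ (F G : ℝ → ℝ), Continuous F → Continuous G →
      IntervalIntegrable (fun x => F x * G x) volume (-1:ℝ) 1 :=
    fun F G hF hG => (hF.mul hG).intervalIntegrable _ _
  have hsplitm : ∀ r : ℕ, (∫ x in (-1:ℝ)..1, zn x * iteratedDeriv (2*r) Wm x)
      = (∫ x in (-1:ℝ)..1, zn x * iteratedDeriv (2*(r+p)) zm x)
        - μ * ∫ x in (-1:ℝ)..1, zn x * iteratedDeriv (2*r) zm x := by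
    intro r
    rw [← intervalIntegral.integral_const_mul,
      ← intervalIntegral.integral_sub
        (hint _ _ hsn.continuous ((hsmj _).continuous))
        (show IntervalIntegrable (fun x => μ * (zn x * iteratedDeriv (2*r) zm x)) volume (-1) 1 from
          (continuous_const.mul (hsn.continuous.mul ((hsmj _).continuous))).intervalIntegrable _ _)]
    apply integral_congr
    intro x _
    beta_reduce
    rw [hWmlin r x]; ring
  have hsplitn : ∀ r : ℕ, (∫ x in (-1:ℝ)..1, zm x * iteratedDeriv (2*r) Wn x)
      = (∫ x in (-1:ℝ)..1, zm x * iteratedDeriv (2*(r+p)) zn x)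
        - μ * ∫ x in (-1:ℝ)..1, zm x * iteratedDeriv (2*r) zn x := by
    intro r
    rw [← intervalIntegral.integral_const_mul,
      ← intervalIntegral.integral_sub
        (hint _ _ hsm.continuous ((hsmi _).continuous))
        (show IntervalIntegrable (fun x => μ * (zm x * iteratedDeriv (2*r) zn x)) volume (-1) 1 from
          (continuous_const.mul (hsm.continuous.mul ((hsmi _).continuous))).intervalIntegrable _ _)]
    apply integral_congr
    intro x _
    beta_reduce
    rw [hWnlin r x]; ring
  -- moment representations
  have cval : ∀ j, j ≤ n - p - 1 → c j = (-1:ℝ)^(n-1) *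
      iteratedDeriv (2*(n-p-1-j)) Wn 0 := by
    intro j hj
    rw [hc j hj, hWndef, hμdef]
    exact stone_val hsn hp hn j hj
  have dval : ∀ j, j ≤ m - p - 1 → d j = (-1:ℝ)^(m-1) *
      iteratedDeriv (2*(m-p-1-j)) Wm 0 := by
    intro j hj
    rw [hd j hj, hWmdef, hμdef]
    exact stone_val hsm hp (hn.trans hm) j hj
  have crep : ∀ K, K ≤ n - p - 1 →
      ∑ i ∈ Finset.range (K+1), b i * c (K - i)
        = (-1:ℝ)^(n-1) * ∫ x in (-1:ℝ)..1, zm x * iteratedDeriv (2*(n-p-1-K)) Wn x := by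
    intro K hK
    have hr := rep zm Wn hsm.continuous hWnsm hWne K (n-p-1-K) (by
      intro x hx
      rw [show 2*((n-p-1-K)+K+1) = 2*(n-p) by omega]
      exact hWn_zero x hx)
    rw [hr, Finset.mul_sum]
    refine Finset.sum_congr rfl fun i hi => ?_
    have hiK : i ≤ K := by
      have := Finset.mem_range.mp hi; omega
    rw [cval (K-i) (by omega), show n-p-1-(K-i) = (n-p-1-K)+i by omega, hb i]
    ring
  have drep : ∀ K, K ≤ m - p - 1 →
      ∑ i ∈ Finset.range (K+1), a i * d (K - i)
        = (-1:ℝ)^(m-1) * ∫ x in (-1:ℝ)..1, zn x * iteratedDeriv (2*(m-p-1-K)) Wm x := by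
    intro K hK
    have hr := rep zn Wm hsn.continuous hWmsm hWme K (m-p-1-K) (by
      intro x hx
      rw [show 2*((m-p-1-K)+K+1) = 2*(m-p) by omega]
      exact hWm_zero x hx)
    rw [hr, Finset.mul_sum]
    refine Finset.sum_congr rfl fun i hi => ?_
    have hiK : i ≤ K := by
      have := Finset.mem_range.mp hi; omega
    rw [dval (K-i) (by omega), show m-p-1-(K-i) = (m-p-1-K)+i by omega, ha i]
    ring
  -- final assembly
  have hdivfacts : 2*(((m:ℤ)-n)/2) ≤ (m:ℤ)-n ∧ (m:ℤ)-n ≤ 2*(((m:ℤ)-n)/2) + 1 := by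
    constructor <;> omega
  by_cases hkneg : k < 0
  · -- negative case
    have hknn : ¬ (k + ((m:ℤ) - n) < 0) := by omega
    set K' : ℕ := (k + ((m:ℤ) - n)).toNat with hK'def
    have hK'le : K' ≤ m - p - 1 := by omega
    have r' : ℕ := m - p - 1 - K'
    have hKd : K' ≤ m - n - 1 := by omega
    have hr'1 : n - p ≤ m - p - 1 - K' := by omega
    have hr'2 : 2*((m - p - 1 - K')+p) ≤ m + n := by omega
    rw [pairC, pairC, if_pos hkneg, if_neg hknn]
    rw [drep K' hK'le]
    have hzero : (∫ x in (-1:ℝ)..1, zn x * iteratedDeriv (2*(m-p-1-K')) Wm x) = 0 := by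
      rw [hsplitm, Rle (m-p-1-K') hr'1 hr'2]
      ring
    rw [hzero]
    ring
  · -- nonnegative case
    push_neg at hkneg
    set K : ℕ := k.toNat with hKdef
    have hKle : K ≤ n - p - 1 := by omega
    have hknn : ¬ (k + ((m:ℤ) - n) < 0) := by omega
    have hKK' : (k + ((m:ℤ) - n)).toNat = K + (m - n) := by omega
    have hK'le : K + (m - n) ≤ m - p - 1 := by omega
    rw [pairC, pairC, if_neg (by omega : ¬ k < 0), if_neg hknn, hKK']
    rw [crep K hKle, drep (K + (m-n)) hK'le]
    have hrr : m - p - 1 - (K + (m-n)) = n - p - 1 - K := by omega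
    rw [hrr]
    set r : ℕ := n - p - 1 - K with hrdef
    have hbound1 : 2*(r+p) ≤ m + n := by omega
    have hbound2 : 2*r ≤ m + n := by omega
    have hIeq : (∫ x in (-1:ℝ)..1, zm x * iteratedDeriv (2*r) Wn x)
        = ∫ x in (-1:ℝ)..1, zn x * iteratedDeriv (2*r) Wm x := by
      rw [hsplitn r, hsplitm r, flip (r+p) hbound1, flip r hbound2]
    rw [hIeq]
    have hsign : (-1:ℝ)^K * (-1:ℝ)^(n-1) = (-1:ℝ)^(K+(m-n)) * (-1:ℝ)^(m-1) := by
      rw [← pow_add, ← pow_add]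
      exact neg_one_pow_congr (by omega)
    calc (-1:ℝ)^K * ((-1:ℝ)^(n-1) * ∫ x in (-1:ℝ)..1, zn x * iteratedDeriv (2*r) Wm x)
        = ((-1:ℝ)^K * (-1:ℝ)^(n-1)) * ∫ x in (-1:ℝ)..1, zn x * iteratedDeriv (2*r) Wm x := by
          ring
      _ = ((-1:ℝ)^(K+(m-n)) * (-1:ℝ)^(m-1)) * ∫ x in (-1:ℝ)..1, zn x * iteratedDeriv (2*r) Wm x := by
          rw [hsign]
      _ = (-1:ℝ)^(K+(m-n)) * ((-1:ℝ)^(m-1) * ∫ x in (-1:ℝ)..1, zn x * iteratedDeriv (2*r) Wm x) := by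
          ring
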